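/- arXiv:0710.0868 — 5 statements merged into one kernel-verified Lean document; each statement's English description precedes it below -/
import Mathlib

section
/- Let r be a C² real-valued function on an open set V ⊆ ℂⁿ with r(p)=0, ∇r(p) ≠ 0, and suppose the Levi form of r at p is strictly positive on the complex tangent space: L_p(r,t) > 0 whenever ∂r_p(t)=0 and t ≠ 0. Then for all sufficiently large M > 0 there exists c > 0 such that the function ρ = r + M r² satisfies L_p(ρ, t) ≥ c‖t‖² for all t ∈ ℂⁿ. -/
/-!
Because `r p = 0`, the Levi form of `r + M r²` at `p` is `L_p(r,t) + 2M |∂r_p(t)|²`.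
Both terms are continuous and quadratic under real scaling of `t`; the second is nonnegative
and vanishes exactly on the complex tangent space, where the first is positive. On the compact
unit sphere the open sets `{L_p(r,t) + M·2|∂r_p(t)|² > 0}` increase with `M` and cover it, so one
`M₀` makes the sum positive on the whole sphere, hence at least some `c > 0` there; homogeneity
spreads `c‖t‖²` to all `t`, and any larger `M` only increases the sum.
-/

/-- The Wirtinger derivative `∂f/∂zⱼ` at `p` of a function on `ℂⁿ`. -/
noncomputable def wirtingerD {n : ℕ} (f : (Fin n → ℂ) → ℂ) (p : Fin n → ℂ) (j : Fin n) : ℂ :=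
  (fderiv ℝ f p (Pi.single j 1) - Complex.I * fderiv ℝ f p (Pi.single j Complex.I)) / 2

/-- The conjugate Wirtinger derivative `∂f/∂z̄ⱼ` at `p`. -/
noncomputable def wirtingerDBar {n : ℕ} (f : (Fin n → ℂ) → ℂ) (p : Fin n → ℂ) (j : Fin n) : ℂ :=
  (fderiv ℝ f p (Pi.single j 1) + Complex.I * fderiv ℝ f p (Pi.single j Complex.I)) / 2

/-- The Levi form `L_p(r,t) = Σ_{j,k} ∂²r/∂zⱼ∂z̄ₖ(p) tⱼ t̄ₖ` of a real function `r`. -/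
noncomputable def leviForm {n : ℕ} (r : (Fin n → ℂ) → ℝ) (p : Fin n → ℂ) (t : Fin n → ℂ) : ℂ :=
  ∑ j, ∑ k,
    wirtingerDBar (fun q => wirtingerD (fun z => ((r z : ℂ))) q j) p k * t j * (starRingEnd ℂ) (t k)

open Filter Topology ComplexConjugate

theorem IsCompact.exists_forall_pos_add_mul {X : Type*} [TopologicalSpace X] {K : Set X}
    (hK : IsCompact K) {φ ψ : X → ℝ} (hφ : Continuous φ) (hψ : Continuous ψ)
    (hψ_nonneg : ∀ x, 0 ≤ ψ x) (hpos : ∀ x ∈ K, ψ x = 0 → 0 < φ x) :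
    ∃ M : ℝ, ∀ x ∈ K, 0 < φ x + M * ψ x := by
  have hmono : Monotone fun M : ℕ => {x | 0 < φ x + M * ψ x} := fun M N hMN x hx =>
    (hx : 0 < φ x + M * ψ x).trans_le
      (show φ x + M * ψ x ≤ φ x + N * ψ x by gcongr; exact hψ_nonneg x)
  have hcover : K ⊆ ⋃ M : ℕ, {x | 0 < φ x + M * ψ x} := fun x hx => by
    rw [Set.mem_iUnion]
    rcases (hψ_nonneg x).eq_or_lt with h | h
    · exact ⟨0, by simpa [← h] using hpos x hx h.symm⟩
    · obtain ⟨M, hM⟩ := exists_nat_gt (-φ x / ψ x)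
      rw [div_lt_iff₀ h] at hM
      exact ⟨M, show 0 < φ x + M * ψ x by linarith⟩
  obtain ⟨M, hM⟩ := hK.elim_directed_cover _
    (fun M : ℕ => isOpen_lt continuous_const (hφ.add (continuous_const.mul hψ)))
    hcover hmono.directed_le
  exact ⟨M, hM⟩

theorem exists_forall_mul_sq_norm_le_add_mul {E : Type*} [NormedAddCommGroup E]
    [NormedSpace ℝ E] [ProperSpace E] {φ ψ : E → ℝ} (hφ : Continuous φ) (hψ : Continuous ψ)
    (hφ_smul : ∀ (s : ℝ) x, φ (s • x) = s ^ 2 * φ x)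
    (hψ_smul : ∀ (s : ℝ) x, ψ (s • x) = s ^ 2 * ψ x)
    (hψ_nonneg : ∀ x, 0 ≤ ψ x) (hpos : ∀ x, ψ x = 0 → x ≠ 0 → 0 < φ x) :
    ∃ M₀ : ℝ, ∀ M ≥ M₀, ∃ c > 0, ∀ x, c * ‖x‖ ^ 2 ≤ φ x + M * ψ x := by
  have hK := isCompact_sphere (0 : E) 1
  obtain ⟨M₀, hM₀⟩ := hK.exists_forall_pos_add_mul hφ hψ hψ_nonneg fun x hx =>
    (hpos x · (ne_zero_of_mem_unit_sphere ⟨x, hx⟩))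
  obtain ⟨c, hc, hcK⟩ := hK.exists_forall_le'
    (hφ.add (continuous_const.mul hψ)).continuousOn hM₀
  refine ⟨M₀, fun M hM => ⟨c, hc, fun x => ?_⟩⟩
  rcases eq_or_ne x 0 with rfl | hx
  · have hφ0 : φ 0 = 0 := by simpa using hφ_smul 0 0
    have hψ0 : ψ 0 = 0 := by simpa using hψ_smul 0 0
    simp [hφ0, hψ0]
  set u := ‖x‖⁻¹ • x
  have hu : u ∈ Metric.sphere (0 : E) 1 := by
    simp [u, norm_smul, inv_mul_cancel₀ (norm_ne_zero_iff.2 hx)]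
  have hxu : x = ‖x‖ • u := by simp [u, smul_smul, mul_inv_cancel₀ (norm_ne_zero_iff.2 hx)]
  clear_value u
  have hMu : φ u + M₀ * ψ u ≤ φ u + M * ψ u := by gcongr; exact hψ_nonneg u
  calc c * ‖x‖ ^ 2 ≤ ‖x‖ ^ 2 * (φ u + M * ψ u) := by
        rw [mul_comm]; gcongr; exact (hcK u hu).trans hMu
    _ = φ x + M * ψ x := by
        rw [hxu, hφ_smul, hψ_smul, norm_smul, norm_norm, mem_sphere_zero_iff_norm.1 hu]
        ring

section Wirtinger

variable {n : ℕ} {f g : (Fin n → ℂ) → ℂ} {r : (Fin n → ℂ) → ℝ} {p : Fin n → ℂ} {j : Fin n}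

theorem Filter.EventuallyEq.wirtingerDBar_eq (h : f =ᶠ[𝓝 p] g) :
    wirtingerDBar f p j = wirtingerDBar g p j := by
  rw [wirtingerDBar, wirtingerDBar, h.fderiv_eq]

theorem wirtingerD_add (hf : DifferentiableAt ℝ f p) (hg : DifferentiableAt ℝ g p) :
    wirtingerD (fun z => f z + g z) p j = wirtingerD f p j + wirtingerD g p j := by
  simp only [wirtingerD, fderiv_fun_add hf hg, add_apply]; ring

theorem wirtingerD_const_mul (c : ℂ) (hf : DifferentiableAt ℝ f p) :
    wirtingerD (fun z => c * f z) p j = c * wirtingerD f p j := by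
  simp only [wirtingerD, fderiv_const_mul hf, smul_apply, smul_eq_mul]; ring

theorem wirtingerD_mul (hf : DifferentiableAt ℝ f p) (hg : DifferentiableAt ℝ g p) :
    wirtingerD (fun z => f z * g z) p j = wirtingerD f p j * g p + f p * wirtingerD g p j := by
  simp only [wirtingerD, fderiv_fun_mul hf hg, add_apply, smul_apply, smul_eq_mul]
  ring

theorem wirtingerDBar_mul (hf : DifferentiableAt ℝ f p) (hg : DifferentiableAt ℝ g p) :
    wirtingerDBar (fun z => f z * g z) p j
      = wirtingerDBar f p j * g p + f p * wirtingerDBar g p j := by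
  simp only [wirtingerDBar, fderiv_fun_mul hf hg, add_apply, smul_apply, smul_eq_mul]
  ring

theorem wirtingerDBar_const_add (c : ℂ) :
    wirtingerDBar (fun z => c + f z) p j = wirtingerDBar f p j := by
  rw [wirtingerDBar, wirtingerDBar, fderiv_const_add]

theorem wirtingerDBar_const_mul (c : ℂ) (hf : DifferentiableAt ℝ f p) :
    wirtingerDBar (fun z => c * f z) p j = c * wirtingerDBar f p j := by
  simp only [wirtingerDBar, fderiv_const_mul hf, smul_apply, smul_eq_mul]; ring

theorem fderiv_ofReal_apply (hr : DifferentiableAt ℝ r p) (v : Fin n → ℂ) :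
    fderiv ℝ (fun z => (r z : ℂ)) p v = fderiv ℝ r p v :=
  congrArg (· v) (Complex.ofRealCLM.hasFDerivAt.comp p hr.hasFDerivAt).fderiv

theorem wirtingerDBar_ofReal_eq_conj (hr : DifferentiableAt ℝ r p) :
    wirtingerDBar (fun z => (r z : ℂ)) p j = conj (wirtingerD (fun z => (r z : ℂ)) p j) := by
  simp only [wirtingerD, wirtingerDBar, fderiv_ofReal_apply hr, map_div₀, map_sub, map_mul,
    Complex.conj_ofReal, Complex.conj_I, map_ofNat]
  ring

theorem ContDiffAt.differentiableAt_wirtingerD (hf : ContDiffAt ℝ 2 f p) :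
    DifferentiableAt ℝ (fun q => wirtingerD f q j) p := by
  have hdf : DifferentiableAt ℝ (fderiv ℝ f) p :=
    (hf.fderiv_right (m := 1) le_rfl).differentiableAt one_ne_zero
  unfold wirtingerD
  fun_prop

end Wirtinger

noncomputable def partialDiff {n : ℕ} (r : (Fin n → ℂ) → ℝ) (p t : Fin n → ℂ) : ℂ :=
  ∑ j, wirtingerD (fun z => (r z : ℂ)) p j * t j

section LeviForm

variable {n : ℕ} {r : (Fin n → ℂ) → ℝ} {p : Fin n → ℂ}

theorem eventuallyEq_wirtingerD_add_mul_sq (hr : ∀ᶠ q in 𝓝 p, DifferentiableAt ℝ r q) (M : ℝ)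
    (j : Fin n) :
    (fun q => wirtingerD (fun z => ((r z + M * r z ^ 2 : ℝ) : ℂ)) q j)
      =ᶠ[𝓝 p] fun q => wirtingerD (fun z => (r z : ℂ)) q j * (1 + 2 * M * r q) := by
  filter_upwards [hr] with q hq
  have hf : DifferentiableAt ℝ (fun z => (r z : ℂ)) q :=
    Complex.ofRealCLM.differentiableAt.comp q hq
  have hff : DifferentiableAt ℝ (fun z => (r z : ℂ) * r z) q := hf.mul hf
  have hsq : (fun z => ((r z + M * r z ^ 2 : ℝ) : ℂ))
      = fun z => (r z : ℂ) + M * ((r z : ℂ) * r z) := by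
    ext z; push_cast; ring
  rw [hsq, wirtingerD_add hf (hff.const_mul _), wirtingerD_const_mul _ hff,
    wirtingerD_mul hf hf]
  ring

theorem wirtingerDBar_wirtingerD_add_mul_sq (hr : ContDiffAt ℝ 2 r p) (hr0 : r p = 0) (M : ℝ)
    (j k : Fin n) :
    wirtingerDBar (fun q => wirtingerD (fun z => ((r z + M * r z ^ 2 : ℝ) : ℂ)) q j) p k
      = wirtingerDBar (fun q => wirtingerD (fun z => (r z : ℂ)) q j) p k
        + 2 * M * wirtingerD (fun z => (r z : ℂ)) p j
          * conj (wirtingerD (fun z => (r z : ℂ)) p k) := by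
  have hdiff : ∀ᶠ q in 𝓝 p, DifferentiableAt ℝ r q :=
    (hr.eventually (by simp)).mono fun q hq => hq.differentiableAt (by norm_num)
  have hrC : ContDiffAt ℝ 2 (fun z => (r z : ℂ)) p :=
    Complex.ofRealCLM.contDiff.contDiffAt.comp p hr
  have hp : DifferentiableAt ℝ (fun z => (r z : ℂ)) p := hrC.differentiableAt (by norm_num)
  rw [(eventuallyEq_wirtingerD_add_mul_sq hdiff M j).wirtingerDBar_eq,
    wirtingerDBar_mul hrC.differentiableAt_wirtingerD ((hp.const_mul _).const_add _),
    wirtingerDBar_const_add, wirtingerDBar_const_mul _ hp,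
    wirtingerDBar_ofReal_eq_conj hdiff.self_of_nhds, hr0]
  push_cast
  ring

theorem leviForm_add_mul_sq (hr : ContDiffAt ℝ 2 r p) (hr0 : r p = 0) (M : ℝ)
    (t : Fin n → ℂ) :
    leviForm (fun z => r z + M * r z ^ 2) p t
      = leviForm r p t + 2 * M * partialDiff r p t * conj (partialDiff r p t) := by
  simp only [leviForm, wirtingerDBar_wirtingerD_add_mul_sq hr hr0, partialDiff, map_sum, map_mul]
  rw [mul_assoc, Finset.sum_mul_sum, Finset.mul_sum, ← Finset.sum_add_distrib]
  refine Finset.sum_congr rfl fun j _ => ?_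
  rw [Finset.mul_sum, ← Finset.sum_add_distrib]
  refine Finset.sum_congr rfl fun k _ => ?_
  ring

theorem re_leviForm_add_mul_sq (hr : ContDiffAt ℝ 2 r p) (hr0 : r p = 0) (M : ℝ)
    (t : Fin n → ℂ) :
    (leviForm (fun z => r z + M * r z ^ 2) p t).re
      = (leviForm r p t).re + M * (2 * Complex.normSq (partialDiff r p t)) := by
  rw [leviForm_add_mul_sq hr hr0, mul_assoc, Complex.mul_conj, Complex.add_re]
  norm_cast
  ring

theorem re_leviForm_real_smul (s : ℝ) (t : Fin n → ℂ) :
    (leviForm r p (s • t)).re = s ^ 2 * (leviForm r p t).re := by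
  have : leviForm r p (s • t) = (s ^ 2 : ℝ) * leviForm r p t := by
    simp only [leviForm, Finset.mul_sum, Pi.smul_apply, Complex.real_smul, map_mul,
      Complex.conj_ofReal]
    refine Finset.sum_congr rfl fun j _ => Finset.sum_congr rfl fun k _ => ?_
    push_cast
    ring
  rw [this, Complex.re_ofReal_mul]

theorem normSq_partialDiff_real_smul (s : ℝ) (t : Fin n → ℂ) :
    Complex.normSq (partialDiff r p (s • t)) = s ^ 2 * Complex.normSq (partialDiff r p t) := by
  have : partialDiff r p (s • t) = s * partialDiff r p t := by
    simp only [partialDiff, Finset.mul_sum, Pi.smul_apply, Complex.real_smul]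
    refine Finset.sum_congr rfl fun j _ => ?_
    ring
  rw [this, Complex.normSq_mul, Complex.normSq_ofReal, sq]

theorem continuous_leviForm : Continuous (leviForm r p) := by
  unfold leviForm
  fun_prop

theorem continuous_partialDiff : Continuous (partialDiff r p) := by
  unfold partialDiff
  fun_prop

end LeviForm

theorem stmt_2_general (n : ℕ) (V : Set (Fin n → ℂ)) (hV : IsOpen V) (r : (Fin n → ℂ) → ℝ)
    (p : Fin n → ℂ) (hp : p ∈ V) (hr : ContDiffOn ℝ 2 r V) (hr0 : r p = 0)
    (hstrict : ∀ t : Fin n → ℂ,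
      (∑ j, wirtingerD (fun z => ((r z : ℂ))) p j * t j) = 0 → t ≠ 0 →
        0 < (leviForm r p t).re) :
    ∃ M₀ : ℝ, ∀ M ≥ M₀, ∃ c > 0, ∀ t : Fin n → ℂ,
      c * ‖t‖ ^ 2 ≤ (leviForm (fun z => r z + M * r z ^ 2) p t).re := by
  have hrp : ContDiffAt ℝ 2 r p := hr.contDiffAt (hV.mem_nhds hp)
  obtain ⟨M₀, hM₀⟩ := exists_forall_mul_sq_norm_le_add_mul
    (φ := fun t => (leviForm r p t).re) (ψ := fun t => 2 * Complex.normSq (partialDiff r p t))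
    (Complex.continuous_re.comp continuous_leviForm)
    (continuous_const.mul (Complex.continuous_normSq.comp continuous_partialDiff))
    re_leviForm_real_smul
    (fun s t => by rw [normSq_partialDiff_real_smul]; ring)
    (fun t => mul_nonneg zero_le_two (Complex.normSq_nonneg _))
    fun t ht ht0 =>
      hstrict t (Complex.normSq_eq_zero.1 ((mul_eq_zero.1 ht).resolve_left two_ne_zero)) ht0
  refine ⟨M₀, fun M hM => ?_⟩
  obtain ⟨c, hc, hct⟩ := hM₀ M hM
  exact ⟨c, hc, fun t => re_leviForm_add_mul_sq hrp hr0 M t ▸ hct t⟩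

/-- If `r` is strictly plurisubharmonic on the complex tangent space at `p`
(strict pseudoconvexity), then for all large `M` the function `ρ = r + M r²` has Levi form
at `p` bounded below by `c‖t‖²` on all of `ℂⁿ`. -/
theorem stmt_2 (n : ℕ) (V : Set (Fin n → ℂ)) (hV : IsOpen V) (r : (Fin n → ℂ) → ℝ)
    (p : Fin n → ℂ) (hp : p ∈ V) (hr : ContDiffOn ℝ 2 r V) (hr0 : r p = 0)
    (hgrad : fderiv ℝ r p ≠ 0)
    (hstrict : ∀ t : Fin n → ℂ,
      (∑ j, wirtingerD (fun z => ((r z : ℂ))) p j * t j) = 0 → t ≠ 0 →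
        0 < (leviForm r p t).re) :
    ∃ M₀ : ℝ, ∀ M ≥ M₀, ∃ c > 0, ∀ t : Fin n → ℂ,
      c * ‖t‖ ^ 2 ≤ (leviForm (fun z => r z + M * r z ^ 2) p t).re :=
  stmt_2_general n V hV r p hp hr hr0 hstrict
end

section
/- Let ρ be a C³ real-valued function defined near 0 in ℂⁿ with ρ(0)=0 and L_0(ρ,t) ≥ c‖t‖² for all t ∈ ℂⁿ with some c>0. Define the holomorphic polynomial g(w) = -2 ∂ρ_0(w) - Σ_{j,k} (∂²ρ/∂zⱼ∂zₖ)(0) wⱼwₖ. Then there is a neighborhood U of 0 such that for every z ∈ U with ρ(z) ≤ 0 and z ≠ 0, Re g(z) > 0; that is, g is a local strong support function at 0 for the region {ρ < 0}. -/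
/-!
Writing `d = ∂ + ∂̄` for real-linear maps on `ℂⁿ`, the real part of Levi's polynomial is
`Re g(z) = L_0(ρ,z) - Dρ(0) z - ½ D²ρ(0)(z,z)`. Together with the second-order Taylor expansion
of `ρ` this gives `ρ(z) = -Re g(z) + L_0(ρ,z) + o(‖z‖²)`, so near `0` on `{ρ ≤ 0}` we get
`Re g(z) ≥ c‖z‖² - o(‖z‖²) > 0`.
-/

open Filter Asymptotics Metric Topology Complex ComplexConjugate ContinuousLinearMap

theorem isLittleO_sub_taylor_two {E F : Type*} [NormedAddCommGroup E] [NormedSpace ℝ E]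
    [NormedAddCommGroup F] [NormedSpace ℝ F] {f : E → F} {x : E}
    (hf : ∀ᶠ y in 𝓝 x, DifferentiableAt ℝ f y) (hf' : DifferentiableAt ℝ (fderiv ℝ f) x)
    (hsymm : IsSymmSndFDerivAt ℝ f x) :
    (fun y => f y - f x - fderiv ℝ f x (y - x)
        - (2 : ℝ)⁻¹ • fderiv ℝ (fderiv ℝ f) x (y - x) (y - x))
      =o[𝓝 x] fun y => ‖y - x‖ ^ 2 := by
  set A := fderiv ℝ (fderiv ℝ f) x
  set g : E → F := fun y => f y - fderiv ℝ f x (y - x) - (2 : ℝ)⁻¹ • A (y - x) (y - x)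
  obtain ⟨r, hr, hball⟩ := Metric.eventually_nhds_iff_ball.1 hf
  have hg : ∀ y ∈ ball x r, HasFDerivAt g (fderiv ℝ f y - fderiv ℝ f x - A (y - x)) y := by
    intro y hy
    have hsub : HasFDerivAt (fun y : E => y - x) (ContinuousLinearMap.id ℝ E) y :=
      (hasFDerivAt_id y).sub_const x
    refine (((hball y hy).hasFDerivAt.sub ((fderiv ℝ f x).hasFDerivAt.comp y hsub)).sub
      ((A.hasFDerivAt_of_bilinear hsub hsub).const_smul (2 : ℝ)⁻¹)).congr_fderiv ?_
    ext v
    have hA : A v (y - x) = A (y - x) v := hsymm v (y - x)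
    simp [-map_sub, hA]
    module
  have hg' : (fun y => fderiv ℝ f y - fderiv ℝ f x - A (y - x)) =o[𝓝[ball x r] x]
      fun y => ‖y - x‖ ^ 1 := by
    simpa using (hf'.hasFDerivAt.isLittleO.norm_right).mono nhdsWithin_le_nhds
  -- The mean value inequality on a ball upgrades `g' = o(‖y - x‖)` to `g - g x = o(‖y - x‖²)`.
  have hgx := (convex_ball x r).isLittleO_pow_succ (mem_ball_self hr)
    (fun y hy => (hg y hy).hasFDerivWithinAt) hg'
  rw [nhdsWithin_eq_nhds.2 (ball_mem_nhds x hr)] at hgx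
  convert hgx using 2 with y
  simp [g]
  abel

section Wirtinger

variable {n : ℕ}

noncomputable def wirtingerCoeff (j : Fin n) : ((Fin n → ℂ) →L[ℝ] ℂ) →L[ℝ] ℂ :=
  (2 : ℂ)⁻¹ • (apply ℝ ℂ (Pi.single j 1) - I • apply ℝ ℂ (Pi.single j I))

noncomputable def wirtingerBarCoeff (j : Fin n) : ((Fin n → ℂ) →L[ℝ] ℂ) →L[ℝ] ℂ :=
  (2 : ℂ)⁻¹ • (apply ℝ ℂ (Pi.single j 1) + I • apply ℝ ℂ (Pi.single j I))

lemma wirtingerCoeff_mul_add_wirtingerBarCoeff_mul (m : (Fin n → ℂ) →L[ℝ] ℂ) (k : Fin n)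
    (w : ℂ) : wirtingerCoeff k m * w + wirtingerBarCoeff k m * conj w = m (Pi.single k w) := by
  have hsingle : (Pi.single k w : Fin n → ℂ)
      = w.re • (Pi.single k 1 : Fin n → ℂ) + w.im • (Pi.single k I : Fin n → ℂ) := by
    ext i
    rcases eq_or_ne i k with rfl | h <;> simp [*]
  rw [hsingle, map_add, map_smul, map_smul]
  simp [wirtingerCoeff, wirtingerBarCoeff, Complex.ext_iff]
  constructor <;> ring

lemma sum_wirtingerCoeff_mul_add_wirtingerBarCoeff_mul (m : (Fin n → ℂ) →L[ℝ] ℂ)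
    (z : Fin n → ℂ) :
    ∑ k, (wirtingerCoeff k m * z k + wirtingerBarCoeff k m * conj (z k)) = m z := by
  simp only [wirtingerCoeff_mul_add_wirtingerBarCoeff_mul, ← map_sum, Finset.univ_sum_single]

lemma re_sum_wirtingerCoeff_ofReal_mul (ℓ : (Fin n → ℂ) →L[ℝ] ℝ) (z : Fin n → ℂ) :
    (∑ k, wirtingerCoeff k (ofRealCLM.comp ℓ) * z k).re = ℓ z / 2 := by
  have hconj : ∀ k, wirtingerBarCoeff k (ofRealCLM.comp ℓ) * conj (z k)
      = conj (wirtingerCoeff k (ofRealCLM.comp ℓ) * z k) := by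
    intro k
    rw [map_mul]
    congr 1
    simp [wirtingerCoeff, wirtingerBarCoeff, map_ofNat]
    ring
  have h := sum_wirtingerCoeff_mul_add_wirtingerBarCoeff_mul (ofRealCLM.comp ℓ) z
  simp only [hconj, Complex.add_conj, coe_comp, Function.comp_apply, ofRealCLM_apply] at h
  norm_cast at h
  rw [← Finset.mul_sum] at h
  rw [re_sum]
  linarith

lemma wirtingerD_eq_wirtingerCoeff (f : (Fin n → ℂ) → ℂ) (p : Fin n → ℂ) (j : Fin n) :
    wirtingerD f p j = wirtingerCoeff j (fderiv ℝ f p) := by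
  simp [wirtingerD, wirtingerCoeff]
  ring

lemma wirtingerDBar_eq_wirtingerBarCoeff (f : (Fin n → ℂ) → ℂ) (p : Fin n → ℂ) (j : Fin n) :
    wirtingerDBar f p j = wirtingerBarCoeff j (fderiv ℝ f p) := by
  simp [wirtingerDBar, wirtingerBarCoeff]
  ring

lemma fderiv_ofReal_comp {E : Type*} [NormedAddCommGroup E] [NormedSpace ℝ E] {ρ : E → ℝ}
    {p : E} (hρ : DifferentiableAt ℝ ρ p) :
    fderiv ℝ (fun w => (ρ w : ℂ)) p = ofRealCLM.comp (fderiv ℝ ρ p) :=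
  (ofRealCLM.hasFDerivAt.comp p hρ.hasFDerivAt).fderiv

lemma re_sum_wirtingerD_ofReal_mul {ρ : (Fin n → ℂ) → ℝ} {p : Fin n → ℂ}
    (hρ : DifferentiableAt ℝ ρ p) (z : Fin n → ℂ) :
    (∑ j, wirtingerD (fun w => (ρ w : ℂ)) p j * z j).re = fderiv ℝ ρ p z / 2 := by
  simp only [wirtingerD_eq_wirtingerCoeff, fderiv_ofReal_comp hρ]
  exact re_sum_wirtingerCoeff_ofReal_mul _ z

lemma hasFDerivAt_wirtingerD_ofReal {ρ : (Fin n → ℂ) → ℝ} {p : Fin n → ℂ}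
    {A : (Fin n → ℂ) →L[ℝ] (Fin n → ℂ) →L[ℝ] ℝ}
    (hρ : ∀ᶠ q in 𝓝 p, DifferentiableAt ℝ ρ q) (hA : HasFDerivAt (fderiv ℝ ρ) A p) (j : Fin n) :
    HasFDerivAt (fun q => wirtingerD (fun w => (ρ w : ℂ)) q j)
      ((wirtingerCoeff j).comp ((compL ℝ _ ℝ ℂ ofRealCLM).comp A)) p := by
  refine (((wirtingerCoeff j).comp (compL ℝ _ ℝ ℂ ofRealCLM)).hasFDerivAt.comp p hA)
    |>.congr_of_eventuallyEq ?_
  filter_upwards [hρ] with q hq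
  simp [wirtingerD_eq_wirtingerCoeff, fderiv_ofReal_comp hq]

lemma re_sum_wirtingerD_wirtingerD_add_re_leviForm {ρ : (Fin n → ℂ) → ℝ} {p : Fin n → ℂ}
    (hρ : ∀ᶠ q in 𝓝 p, DifferentiableAt ℝ ρ q) (hρ' : DifferentiableAt ℝ (fderiv ℝ ρ) p)
    (z : Fin n → ℂ) :
    (∑ j, ∑ k, wirtingerD (fun q => wirtingerD (fun w => (ρ w : ℂ)) q j) p k * z j * z k).re
      + (leviForm ρ p z).re = fderiv ℝ (fderiv ℝ ρ) p z z / 2 := by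
  set A := fderiv ℝ (fderiv ℝ ρ) p
  set M := fun j => fderiv ℝ (fun q => wirtingerD (fun w => (ρ w : ℂ)) q j) p
  have hM : ∀ j, M j z = wirtingerCoeff j (ofRealCLM.comp (A z)) := fun j => by
    simp only [M, (hasFDerivAt_wirtingerD_ofReal hρ hρ'.hasFDerivAt j).fderiv]
    rfl
  calc _ = (∑ j, z j * ∑ k,
        (wirtingerCoeff k (M j) * z k + wirtingerBarCoeff k (M j) * conj (z k))).re := by
        rw [leviForm, ← add_re, ← Finset.sum_add_distrib]
        congr 1
        refine Finset.sum_congr rfl fun j _ => ?_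
        rw [Finset.mul_sum, ← Finset.sum_add_distrib]
        refine Finset.sum_congr rfl fun k _ => ?_
        rw [wirtingerD_eq_wirtingerCoeff, wirtingerDBar_eq_wirtingerBarCoeff]
        ring
    _ = (∑ j, wirtingerCoeff j (ofRealCLM.comp (A z)) * z j).re := by
        simp_rw [sum_wirtingerCoeff_mul_add_wirtingerBarCoeff_mul, hM, mul_comm (z _)]
    _ = A z z / 2 := re_sum_wirtingerCoeff_ofReal_mul _ z

noncomputable def leviPolynomial (ρ : (Fin n → ℂ) → ℝ) (p z : Fin n → ℂ) : ℂ :=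
  (-2 * ∑ j, wirtingerD (fun w => (ρ w : ℂ)) p j * z j)
    - ∑ j, ∑ k, wirtingerD (fun q => wirtingerD (fun w => (ρ w : ℂ)) q j) p k * z j * z k

lemma re_leviPolynomial {ρ : (Fin n → ℂ) → ℝ} {p : Fin n → ℂ}
    (hρ : ∀ᶠ q in 𝓝 p, DifferentiableAt ℝ ρ q) (hρ' : DifferentiableAt ℝ (fderiv ℝ ρ) p)
    (z : Fin n → ℂ) :
    (leviPolynomial ρ p z).re
      = (leviForm ρ p z).re - fderiv ℝ ρ p z - fderiv ℝ (fderiv ℝ ρ) p z z / 2 := by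
  have hlin := re_sum_wirtingerD_ofReal_mul hρ.self_of_nhds z
  have hquad := re_sum_wirtingerD_wirtingerD_add_re_leviForm hρ hρ' z
  have hre : (-2 : ℂ).re = -2 := by norm_num
  have him : (-2 : ℂ).im = 0 := by norm_num
  simp only [leviPolynomial, sub_re, mul_re, hre, him, zero_mul, sub_zero]
  linarith

theorem isLittleO_sub_add_re_leviPolynomial_sub_re_leviForm {ρ : (Fin n → ℂ) → ℝ}
    {p : Fin n → ℂ} (hρ : ContDiffAt ℝ 2 ρ p) :
    (fun z => ρ z - ρ p + (leviPolynomial ρ p (z - p)).re - (leviForm ρ p (z - p)).re)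
      =o[𝓝 p] fun z => ‖z - p‖ ^ 2 := by
  have hd : ∀ᶠ q in 𝓝 p, DifferentiableAt ℝ ρ q :=
    (hρ.eventually (by simp)).mono fun q hq => hq.differentiableAt (by simp)
  have hd' : DifferentiableAt ℝ (fderiv ℝ ρ) p :=
    (hρ.fderiv_right (m := 1) le_rfl).differentiableAt one_ne_zero
  refine (isLittleO_sub_taylor_two hd hd' (hρ.isSymmSndFDerivAt (by simp))).congr_left
    fun z => ?_
  rw [re_leviPolynomial hd hd', smul_eq_mul]
  ring

end Wirtinger

/-- Levi's construction of a local strong support function: with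
`L_0(ρ,t) ≥ c‖t‖²`, the holomorphic polynomial
`g(w) = -2∂ρ_0(w) - Σ_{j,k} ∂²ρ/∂zⱼ∂zₖ(0) wⱼwₖ` has `Re g > 0` on `{ρ ≤ 0}\{0}` near `0`. -/
theorem stmt_3 (n : ℕ) (V : Set (Fin n → ℂ)) (hV : IsOpen V) (h0V : (0 : Fin n → ℂ) ∈ V)
    (ρ : (Fin n → ℂ) → ℝ) (hρ : ContDiffOn ℝ 3 ρ V) (hρ0 : ρ 0 = 0)
    (c : ℝ) (hc : 0 < c)
    (hLevi : ∀ t : Fin n → ℂ, c * ‖t‖ ^ 2 ≤ (leviForm ρ 0 t).re) :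
    ∃ U ∈ nhds (0 : Fin n → ℂ), ∀ z ∈ U, ρ z ≤ 0 → z ≠ 0 →
      0 < ((-2 * ∑ j, wirtingerD (fun w => ((ρ w : ℂ))) 0 j * z j)
        - ∑ j, ∑ k,
            wirtingerD (fun q => wirtingerD (fun w => ((ρ w : ℂ))) q j) 0 k * z j * z k).re := by
  have hρ2 : ContDiffAt ℝ 2 ρ 0 := (hρ.contDiffAt (hV.mem_nhds h0V)).of_le (by norm_num)
  have hTaylor := isLittleO_sub_add_re_leviPolynomial_sub_re_leviForm hρ2
  refine ⟨_, hTaylor.def (half_pos hc), fun z hz hρz hz0 => ?_⟩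
  change 0 < (leviPolynomial ρ 0 z).re
  simp only [Set.mem_ofPred_eq, sub_zero, hρ0, norm_pow, Real.norm_eq_abs, abs_norm] at hz
  have hzpos : 0 < ‖z‖ := norm_pos_iff.2 hz0
  nlinarith [abs_le.1 hz, hLevi z, mul_pos hc (pow_pos hzpos 2)]
end

section
/- For every t with 0 < t ≤ 4/3 and every ε with 0 < ε < 1 - 3t/4, there exists c > 0 such that for all z ∈ ℂ, |z|⁴ + t|z|² Re(z²) + (t/(4(1-ε))) Re(z⁴) ≥ c|z|⁴. -/
/-!
Substituting `w = z²` turns the left side into `R² + t R x + s (2x² - R²)` with `R = |w|`,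
`x = Re w`, `s = t / (4a)` and `a = 1 - ε`. Since `t = 4as`, completing the square gives
`(1 - s - t a / 2) R² + (t / (2a)) (x + a R)²`, and the constant `1 - s - t a / 2` is positive
because `3t/4 < a ≤ 1`.
-/

theorem Complex.re_sq_eq_two_mul_re_sq_sub_sq_norm (w : ℂ) :
    (w ^ 2).re = 2 * w.re ^ 2 - ‖w‖ ^ 2 := by
  rw [Complex.sq_norm, Complex.normSq_apply, pow_two, Complex.mul_re]
  ring

theorem quadratic_form_ge_mul_sq {a t : ℝ} (ha : 0 < a) (ht : 0 ≤ t) (R x : ℝ) :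
    (1 - t / (4 * a) - t * a / 2) * R ^ 2 ≤
      R ^ 2 + t * R * x + t / (4 * a) * (2 * x ^ 2 - R ^ 2) := by
  have hsquare : R ^ 2 + t * R * x + t / (4 * a) * (2 * x ^ 2 - R ^ 2)
      = (1 - t / (4 * a) - t * a / 2) * R ^ 2 + t / (2 * a) * (x + a * R) ^ 2 := by
    field_simp
    ring
  rw [hsquare, le_add_iff_nonneg_right]
  positivity

theorem one_sub_div_sub_mul_pos {a t : ℝ} (ha : 0 < a) (hta : 3 * t / 4 < a) (ha1 : a ≤ 1) :
    0 < 1 - t / (4 * a) - t * a / 2 := by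
  have hnum : 0 < 4 * a - t * (1 + 2 * a ^ 2) := by
    have hsplit : 4 * a - t * (1 + 2 * a ^ 2)
        = 8 * a / 3 * (1 - a ^ 2) + (4 * a / 3 - t) * (1 + 2 * a ^ 2) := by ring
    rw [hsplit]
    have : 0 ≤ 1 - a ^ 2 := by nlinarith
    have : 0 < 4 * a / 3 - t := by linarith
    positivity
  have hc : 1 - t / (4 * a) - t * a / 2 = (4 * a - t * (1 + 2 * a ^ 2)) / (4 * a) := by
    field_simp
    ring
  rw [hc]
  positivity

theorem stmt_7_general (t ε : ℝ) (ht : 0 < t) (hε : 0 < ε) (hε' : ε < 1 - 3*t/4) :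
    ∃ c > 0, ∀ z : ℂ, c * ‖z‖ ^ 4 ≤
      ‖z‖ ^ 4 + t * ‖z‖ ^ 2 * (z ^ 2).re
        + t / (4 * (1 - ε)) * (z ^ 4).re := by
  have ha : 0 < 1 - ε := by linarith
  refine ⟨1 - t / (4 * (1 - ε)) - t * (1 - ε) / 2,
    one_sub_div_sub_mul_pos ha (by linarith) (by linarith), fun z => ?_⟩
  have hnorm4 : ‖z‖ ^ 4 = ‖z ^ 2‖ ^ 2 := by rw [norm_pow, ← pow_mul]
  have hpow4 : z ^ 4 = (z ^ 2) ^ 2 := by rw [← pow_mul]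
  rw [← norm_pow z 2, hnorm4, hpow4, Complex.re_sq_eq_two_mul_re_sq_sub_sq_norm (z ^ 2)]
  exact quadratic_form_ge_mul_sq ha ht.le _ _

/-- For `0 < t ≤ 4/3` and `0 < ε < 1 - 3t/4` there is `c > 0` with
`|z|⁴ + t|z|²Re(z²) + (t/(4(1-ε)))Re(z⁴) ≥ c|z|⁴` for all `z ∈ ℂ`. -/
theorem stmt_7 (t ε : ℝ) (ht : 0 < t) (ht' : t ≤ 4/3) (hε : 0 < ε) (hε' : ε < 1 - 3*t/4) :
    ∃ c > 0, ∀ z : ℂ, c * ‖z‖ ^ 4 ≤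
      ‖z‖ ^ 4 + t * ‖z‖ ^ 2 * (z ^ 2).re
        + t / (4 * (1 - ε)) * (z ^ 4).re :=
  stmt_7_general t ε ht hε hε'
end

section
/- Let t > 1 and P(z) = |z|⁶ + t|z|² Re(z⁴). Then P takes strictly negative values in every neighborhood of 0 in ℂ, and there is no holomorphic function h on a neighborhood of 0 ∈ ℂ with h(0)=0, h(iz) = h(z) identically, and Re h(z) + P(z) + |z h(z)|² ≥ 0 for all z near 0. -/
/-!
On a ray `z = s ω` (`s > 0`, `|ω| = 1`) we have `P(z) = s⁶ (1 + t Re ω⁴)`, which equals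
`(1 - t) s⁶ < 0` when `ω⁴ = -1`. If `h` is not identically zero near `0`, write `h = zⁿ g` with
`g(0) ≠ 0`; then along the ray
`Re h + P + |z h|² = sⁿ Re(ωⁿ g(sω)) + s⁶ (1 + t Re ω⁴) + s²ⁿ⁺² |g(sω)|²`.
For `n < 6` choose `ω` with `ωⁿ g(0) < 0`, for `n > 6` take `ω⁴ = -1`: in both cases the lowest
order term is negative. The symmetry `h(iz) = h(z)` gives `iⁿ = 1`, i.e. `4 ∣ n`, which rules out
the balanced case `n = 6`.
-/

open Filter Topology Complex ComplexConjugate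

noncomputable def fornaessP (t : ℝ) (z : ℂ) : ℝ := ‖z‖ ^ 6 + t * ‖z‖ ^ 2 * (z ^ 4).re

/-- The defining function of Fornæss's domain `{fornaessRho t z w < 0}` in `ℂ²`. -/
noncomputable def fornaessRho (t : ℝ) (z w : ℂ) : ℝ := w.re + fornaessP t z + ‖z * w‖ ^ 2

lemma exists_norm_eq_one_pow_eq {u : ℂ} (hu : ‖u‖ = 1) {n : ℕ} (hn : n ≠ 0) :
    ∃ ω : ℂ, ‖ω‖ = 1 ∧ ω ^ n = u := by
  obtain ⟨ω, hω⟩ := IsAlgClosed.exists_pow_nat_eq u (Nat.pos_of_ne_zero hn)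
  refine ⟨ω, (pow_eq_one_iff_of_nonneg (norm_nonneg ω) hn).mp ?_, hω⟩
  rw [← norm_pow, hω, hu]

lemma tendsto_ofReal_mul_nhdsGT (ω : ℂ) :
    Tendsto (fun s : ℝ => (s : ℂ) * ω) (𝓝[>] 0) (𝓝 0) :=
  ((continuous_ofReal.mul continuous_const).tendsto' 0 0 (by simp)).mono_left nhdsWithin_le_nhds

lemma tendsto_I_mul_nhds_zero : Tendsto (I * ·) (𝓝 0) (𝓝 0) :=
  (continuous_const_mul I).tendsto' 0 0 (mul_zero I)

lemma not_eventually_nonneg_of_ray {F : ℂ → ℝ} {φ : ℝ → ℝ} {ω : ℂ} {k : ℕ}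
    (hφ : ContinuousAt φ 0) (hφ0 : φ 0 < 0)
    (hF : ∀ᶠ s : ℝ in 𝓝[>] 0, F (s * ω) = s ^ k * φ s) : ¬ ∀ᶠ z in 𝓝 0, 0 ≤ F z := by
  intro hnonneg
  have hφneg : ∀ᶠ s : ℝ in 𝓝[>] 0, φ s < 0 :=
    nhdsWithin_le_nhds (hφ.eventually (gt_mem_nhds hφ0))
  obtain ⟨s, hFs, hs, hφs, hnonneg_s⟩ :=
    (hF.and (eventually_mem_nhdsWithin.and (hφneg.and
      ((tendsto_ofReal_mul_nhdsGT ω).eventually hnonneg)))).exists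
  have : F (s * ω) < 0 := hFs ▸ mul_neg_of_pos_of_neg (pow_pos hs k) hφs
  linarith

lemma fornaessP_ofReal_mul (t : ℝ) {s : ℝ} (hs : 0 ≤ s) {ω : ℂ} (hω : ‖ω‖ = 1) :
    fornaessP t (s * ω) = s ^ 6 * (1 + t * (ω ^ 4).re) := by
  have hnorm : ‖(s : ℂ) * ω‖ = s := by simp [hω, abs_of_nonneg hs]
  rw [fornaessP, hnorm, mul_pow, ← ofReal_pow, re_ofReal_mul]
  ring

lemma fornaessRho_ofReal_mul_pow_mul (t : ℝ) {s : ℝ} (hs : 0 ≤ s) {ω : ℂ} (hω : ‖ω‖ = 1)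
    (n : ℕ) (a : ℂ) :
    fornaessRho t (s * ω) ((s * ω) ^ n * a) =
      s ^ n * (ω ^ n * a).re + s ^ 6 * (1 + t * (ω ^ 4).re) + s ^ (2 * n + 2) * ‖a‖ ^ 2 := by
  have hnorm : ‖(s : ℂ) * ω‖ = s := by simp [hω, abs_of_nonneg hs]
  have hprod : ‖(s : ℂ) * ω * ((s * ω) ^ n * a)‖ = s ^ (n + 1) * ‖a‖ := by
    rw [norm_mul (_ * ω), hnorm, norm_mul, norm_pow, hnorm]; ring
  rw [fornaessRho, fornaessP_ofReal_mul t hs hω, hprod, mul_pow, mul_assoc, ← ofReal_pow,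
    re_ofReal_mul]
  ring

lemma fornaessP_not_eventually_nonneg {t : ℝ} (ht : 1 < t) :
    ¬ ∀ᶠ z in 𝓝 0, 0 ≤ fornaessP t z := by
  obtain ⟨ζ, hζ, hζ4⟩ := exists_norm_eq_one_pow_eq (u := -1) (by simp) four_ne_zero
  refine not_eventually_nonneg_of_ray (φ := fun _ => 1 - t) (ω := ζ) (k := 6)
    continuousAt_const (by linarith) ?_
  filter_upwards [eventually_mem_nhdsWithin] with s hs
  rw [fornaessP_ofReal_mul t (le_of_lt hs) hζ, hζ4, neg_re, one_re]
  ring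

lemma exists_norm_lt_fornaessP_neg {t : ℝ} (ht : 1 < t) {ε : ℝ} (hε : 0 < ε) :
    ∃ z : ℂ, ‖z‖ < ε ∧ fornaessP t z < 0 := by
  have hP := fornaessP_not_eventually_nonneg ht
  rw [Metric.eventually_nhds_iff] at hP
  push Not at hP
  obtain ⟨z, hz, hPz⟩ := hP ε hε
  exact ⟨z, by simpa using hz, hPz⟩

lemma eventually_fornaessRho_ofReal_mul_eq {t : ℝ} {h g : ℂ → ℂ} {n : ℕ}
    (hhg : ∀ᶠ z in 𝓝 0, h z = z ^ n * g z) {ω : ℂ} (hω : ‖ω‖ = 1) :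
    ∀ᶠ s : ℝ in 𝓝[>] 0, fornaessRho t (s * ω) (h (s * ω)) =
      s ^ n * (ω ^ n * g (s * ω)).re + s ^ 6 * (1 + t * (ω ^ 4).re)
        + s ^ (2 * n + 2) * ‖g (s * ω)‖ ^ 2 := by
  filter_upwards [(tendsto_ofReal_mul_nhdsGT ω).eventually hhg, eventually_mem_nhdsWithin]
    with s hs hpos
  rw [hs, fornaessRho_ofReal_mul_pow_mul t (le_of_lt hpos) hω]

lemma not_eventually_nonneg_fornaessRho_of_lt_six {t : ℝ} {h g : ℂ → ℂ} {n : ℕ}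
    (hg : ContinuousAt g 0) (hg0 : g 0 ≠ 0) (hn : n ≠ 0) (hn6 : n < 6)
    (hhg : ∀ᶠ z in 𝓝 0, h z = z ^ n * g z) :
    ¬ ∀ᶠ z in 𝓝 0, 0 ≤ fornaessRho t z (h z) := by
  obtain ⟨ω, hω, hωn⟩ :=
    exists_norm_eq_one_pow_eq (u := -conj (g 0) / ‖g 0‖) (by simp [hg0]) hn
  obtain ⟨m, hm⟩ := Nat.exists_eq_add_of_lt hn6
  have hγ : ContinuousAt (fun s : ℝ => g (s * ω)) 0 := hg.comp_of_eq (by fun_prop) (by simp)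
  refine not_eventually_nonneg_of_ray (F := fun z => fornaessRho t z (h z)) (ω := ω) (k := n)
    (φ := fun s => (ω ^ n * g (s * ω)).re + s ^ (m + 1) * (1 + t * (ω ^ 4).re)
      + s ^ (n + 2) * ‖g (s * ω)‖ ^ 2)
    (((continuous_re.continuousAt.comp (continuousAt_const.mul hγ)).add (by fun_prop)).add
      ((continuousAt_id.pow _).mul (hγ.norm.pow 2))) ?_ ?_
  · have hc : (‖g 0‖ : ℂ) ≠ 0 := by simpa using hg0
    have hlead : ω ^ n * g 0 = -‖g 0‖ := by
      rw [hωn, div_mul_eq_mul_div, neg_mul, conj_mul', div_eq_iff hc]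
      ring
    simpa [hlead] using hg0
  · filter_upwards [eventually_fornaessRho_ofReal_mul_eq hhg hω] with s hs
    rw [hs, hm]
    ring

lemma not_eventually_nonneg_fornaessRho_of_six_lt {t : ℝ} (ht : 1 < t) {h g : ℂ → ℂ} {n : ℕ}
    (hg : ContinuousAt g 0) (hn6 : 6 < n) (hhg : ∀ᶠ z in 𝓝 0, h z = z ^ n * g z) :
    ¬ ∀ᶠ z in 𝓝 0, 0 ≤ fornaessRho t z (h z) := by
  obtain ⟨ζ, hζ, hζ4⟩ := exists_norm_eq_one_pow_eq (u := -1) (by simp) four_ne_zero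
  obtain ⟨m, rfl⟩ := Nat.exists_eq_add_of_lt hn6
  have hγ : ContinuousAt (fun s : ℝ => g (s * ζ)) 0 := hg.comp_of_eq (by fun_prop) (by simp)
  refine not_eventually_nonneg_of_ray (F := fun z => fornaessRho t z (h z)) (ω := ζ) (k := 6)
    (φ := fun s => s ^ (m + 1) * (ζ ^ (6 + m + 1) * g (s * ζ)).re + (1 + t * (ζ ^ 4).re)
      + s ^ (2 * m + 10) * ‖g (s * ζ)‖ ^ 2)
    ((((continuousAt_id.pow _).mul (continuous_re.continuousAt.comp
      (continuousAt_const.mul hγ))).add continuousAt_const).add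
      ((continuousAt_id.pow _).mul (hγ.norm.pow 2))) ?_ ?_
  · simp [hζ4]
    linarith
  · filter_upwards [eventually_fornaessRho_ofReal_mul_eq hhg hζ] with s hs
    rw [hs]
    ring

lemma I_pow_eq_one_of_eventually_invariant {h g : ℂ → ℂ} {n : ℕ} (hg : ContinuousAt g 0)
    (hg0 : g 0 ≠ 0) (hhg : ∀ᶠ z in 𝓝 0, h z = z ^ n * g z)
    (hsym : ∀ᶠ z in 𝓝 0, h (I * z) = h z) : I ^ n = 1 := by
  have hIg : ContinuousAt (fun z => I ^ n * g (I * z)) 0 :=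
    continuousAt_const.mul (hg.comp_of_eq (by fun_prop) (mul_zero I))
  have hpunct : (fun z => I ^ n * g (I * z)) =ᶠ[𝓝[≠] 0] g := by
    filter_upwards [nhdsWithin_le_nhds
      (hsym.and (hhg.and (tendsto_I_mul_nhds_zero.eventually hhg))), eventually_mem_nhdsWithin] with z ⟨hs, hz, hIz⟩ hz0
    apply mul_left_cancel₀ (pow_ne_zero n hz0)
    calc z ^ n * (I ^ n * g (I * z)) = (I * z) ^ n * g (I * z) := by ring
      _ = z ^ n * g z := by rw [← hIz, hs, hz]
  have h0 := ((hIg.eventuallyEq_nhds_iff_eventuallyEq_nhdsNE hg).mp hpunct).eq_of_nhds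
  simp only [mul_zero] at h0
  exact mul_right_cancel₀ hg0 (h0.trans (one_mul _).symm)

/-- for `t > 1`, `P(z) = |z|⁶ + t|z|²Re(z⁴)` takes negative values in every
neighborhood of `0`, and there is no holomorphic `h` near `0` with `h(0)=0`, `h(iz)=h(z)`,
and `Re h(z) + P(z) + |z h(z)|² ≥ 0` near `0`. -/
theorem stmt_10 (t : ℝ) (ht : 1 < t) :
    (∀ ε > 0, ∃ z : ℂ, ‖z‖ < ε ∧
      ‖z‖ ^ 6 + t * ‖z‖ ^ 2 * (z ^ 4).re < 0) ∧
    ¬ ∃ (U : Set ℂ) (h : ℂ → ℂ), U ∈ nhds (0 : ℂ) ∧ DifferentiableOn ℂ h U ∧ h 0 = 0 ∧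
      (∀ z ∈ U, Complex.I * z ∈ U → h (Complex.I * z) = h z) ∧
      ∀ z ∈ U, 0 ≤ (h z).re + (‖z‖ ^ 6 + t * ‖z‖ ^ 2 * (z ^ 4).re)
        + ‖z * h z‖ ^ 2 := by
  refine ⟨fun ε hε => exists_norm_lt_fornaessP_neg ht hε, ?_⟩
  rintro ⟨U, h, hU, hdiff, h0, hsymU, hρU⟩
  have hρ : ∀ᶠ z in 𝓝 0, 0 ≤ fornaessRho t z (h z) := eventually_of_mem hU hρU
  have hsym : ∀ᶠ z in 𝓝 0, h (I * z) = h z := by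
    filter_upwards [hU, tendsto_I_mul_nhds_zero.eventually hU] with z hz hIz
      using hsymU z hz hIz
  cases hord : analyticOrderAt h 0 with
  | top =>
    refine fornaessP_not_eventually_nonneg ht ?_
    filter_upwards [hρ, analyticOrderAt_eq_top.mp hord] with z hz hhz
    simpa [fornaessRho, hhz] using hz
  | coe n =>
    obtain ⟨g, hg, hg0, hhg⟩ := (hdiff.analyticAt hU).analyticOrderAt_eq_natCast.mp hord
    simp only [sub_zero, smul_eq_mul] at hhg
    have hn : n ≠ 0 := by
      rintro rfl
      have hg00 : 0 = g 0 := by simpa [h0] using hhg.self_of_nhds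
      exact hg0 hg00.symm
    have h4 : 4 ∣ n := isPrimitiveRoot_I.pow_eq_one_iff_dvd n |>.mp
      (I_pow_eq_one_of_eventually_invariant hg.continuousAt hg0 hhg hsym)
    rcases lt_or_gt_of_ne (show n ≠ 6 by omega) with hn6 | hn6
    · exact not_eventually_nonneg_fornaessRho_of_lt_six hg.continuousAt hg0 hn hn6 hhg hρ
    · exact not_eventually_nonneg_fornaessRho_of_six_lt ht hg.continuousAt hn6 hhg hρ
end

section
/- Let D be a bounded domain in ℂⁿ, p ∈ ∂D, and K the Bergman kernel of D. Suppose h: cl(D)\{p} → ℂ is continuous, holomorphic on D (after removing p), agrees with z ↦ K(z,q) for boundary behavior, and |h(z)| → ∞ as z → p within D, with h nonvanishing near p on cl(D)\{p}. Then 1/h extends to a function in A(D ∩ V) for some neighborhood V of p whose only zero on cl(D ∩ V) is at p; consequently {p} is a local zero set for A(D). -/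
open Filter Function Metric Set Topology

theorem ContinuousOn.update_inv_of_tendsto_norm_atTop {X 𝕜 : Type*} [TopologicalSpace X]
    [T1Space X] [DecidableEq X] [NormedDivisionRing 𝕜] {f : X → 𝕜} {s : Set X} {p : X}
    (hf : ContinuousOn f (s \ {p})) (hf₀ : ∀ z ∈ s \ {p}, f z ≠ 0)
    (hlim : Tendsto (fun z => ‖f z‖) (𝓝[s \ {p}] p) atTop) :
    ContinuousOn (update (fun z => (f z)⁻¹) p 0) s :=
  continuousOn_update_iff.2 ⟨hf.inv₀ hf₀, fun _ =>
    tendsto_inv₀_cobounded.comp (tendsto_norm_atTop_iff_cobounded.1 hlim)⟩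

theorem DifferentiableOn.update_inv_of_notMem {𝕜 E : Type*} [NontriviallyNormedField 𝕜]
    [NormedAddCommGroup E] [NormedSpace 𝕜 E] [DecidableEq E] {f : E → 𝕜} {s : Set E} {p : E}
    (hf : DifferentiableOn 𝕜 f s) (hf₀ : ∀ z ∈ s, f z ≠ 0) (hp : p ∉ s) :
    DifferentiableOn 𝕜 (update (fun z => (f z)⁻¹) p 0) s :=
  (hf.inv hf₀).congr fun _ hz => update_of_ne (ne_of_mem_of_not_mem hz hp) ..

theorem stmt_18_general (n : ℕ) (D : Set (Fin n → ℂ)) (hD : IsOpen D)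
    (p : Fin n → ℂ) (hp : p ∈ frontier D)
    (h : (Fin n → ℂ) → ℂ) (hhol : DifferentiableOn ℂ h D)
    (hcont : ContinuousOn h (closure D \ {p}))
    (hblow : Filter.Tendsto (fun z => ‖h z‖)
      (nhdsWithin p (closure D \ {p})) Filter.atTop)
    (hnv : ∃ ε > 0, ∀ z ∈ closure D \ {p}, dist z p < ε → h z ≠ 0) :
    ∃ V : Set (Fin n → ℂ), IsOpen V ∧ p ∈ V ∧
      ∃ g : (Fin n → ℂ) → ℂ, ContinuousOn g (closure (D ∩ V)) ∧
        DifferentiableOn ℂ g (D ∩ V) ∧ g p = 0 ∧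
        (∀ z ∈ closure (D ∩ V), z ≠ p → g z ≠ 0) ∧
        (∀ z ∈ (closure D \ {p}) ∩ V, g z = (h z)⁻¹) := by
  classical
  obtain ⟨ε, hε, hnv⟩ := hnv
  have hpD : p ∉ D := by
    rw [hD.frontier_eq] at hp
    exact hp.2
  -- Halving the radius keeps the closure of `D ∩ V` inside the region where `h ≠ 0`.
  set V := ball p (ε / 2)
  have hsub : closure (D ∩ V) \ {p} ⊆ closure D \ {p} :=
    sdiff_subset_sdiff_left (closure_mono inter_subset_left)
  have hne : ∀ z ∈ closure (D ∩ V) \ {p}, h z ≠ 0 := by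
    refine fun z hz => hnv z (hsub hz) ?_
    have : dist z p ≤ ε / 2 :=
      closure_ball_subset_closedBall (closure_mono inter_subset_right hz.1)
    linarith
  refine ⟨V, isOpen_ball, mem_ball_self (half_pos hε), update (fun z => (h z)⁻¹) p 0,
    ?_, ?_, update_self .., ?_, fun z hz => update_of_ne hz.1.2 ..⟩
  · exact (hcont.mono hsub).update_inv_of_tendsto_norm_atTop hne
      (hblow.mono_left (nhdsWithin_mono _ hsub))
  · refine (hhol.mono inter_subset_left).update_inv_of_notMem (fun z hz => hne z ?_)
      (fun hp => hpD hp.1)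
    exact ⟨subset_closure hz, ne_of_mem_of_not_mem hz.1 hpD⟩
  · intro z hz hzp
    rw [update_of_ne hzp]
    exact inv_ne_zero (hne z ⟨hz, hzp⟩)

/-- if `h` is holomorphic on `D`, continuous on `cl(D)\{p}`, nonvanishing near
`p`, and `|h| → ∞` at `p`, then `1/h` extends to a function in `A(D ∩ V)` for some
neighborhood `V` of `p` whose only zero on `cl(D ∩ V)` is `p`; so `{p}` is a local zero set
for `A(D)`. -/
theorem stmt_18 (n : ℕ) (D : Set (Fin n → ℂ)) (hD : IsOpen D) (hDc : IsConnected D)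
    (hDb : Bornology.IsBounded D) (p : Fin n → ℂ) (hp : p ∈ frontier D)
    (h : (Fin n → ℂ) → ℂ) (hhol : DifferentiableOn ℂ h D)
    (hcont : ContinuousOn h (closure D \ {p}))
    (hblow : Filter.Tendsto (fun z => ‖h z‖)
      (nhdsWithin p (closure D \ {p})) Filter.atTop)
    (hnv : ∃ ε > 0, ∀ z ∈ closure D \ {p}, dist z p < ε → h z ≠ 0) :
    ∃ V : Set (Fin n → ℂ), IsOpen V ∧ p ∈ V ∧
      ∃ g : (Fin n → ℂ) → ℂ, ContinuousOn g (closure (D ∩ V)) ∧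
        DifferentiableOn ℂ g (D ∩ V) ∧ g p = 0 ∧
        (∀ z ∈ closure (D ∩ V), z ≠ p → g z ≠ 0) ∧
        (∀ z ∈ (closure D \ {p}) ∩ V, g z = (h z)⁻¹) :=
  stmt_18_general n D hD p hp h hhol hcont hblow hnv
end
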